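/- arXiv:2105.13167 — 2 statements merged into one kernel-verified Lean document; each statement's English description precedes it below -/
import Mathlib

section
/- Let Q be the power series k-algebra in e ≥ 3 variables, I1, I2 ⊆ q^2 homogeneous q-primary ideals with compressed Gorenstein quotients R1, R2 of socle degrees s1 ≤ s2, and assume R = Q/(I1 ∩ I2) is compressed of type 2 with socle degree s and initial degree t. Then h_R(i) = min{h_Q(i), h_{R1}(i) + h_{R2}(i)} for all i ≥ 0, and t = min{ i : h_Q(i) > h_{R1}(i) + h_{R2}(i) }. -/
/-!
For a homogeneous ideal `J`, `h_{Q/J}(i)` is the codimension of `J_i` in the forms of degree `i`.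
Hence `h_R ≤ h_{R1} + h_{R2}` and `h_R ≤ h_Q`, while for `s1 ≤ b` the compressed value
`min{h_Q, h_Q(b - ·) + h_Q(s2 - ·)}` is at least `min{h_Q, h_{R1} + h_{R2}}`; this gives the
formula for `h_R`, and `t` is the first degree in which `h_R` drops below `h_Q`.

The inequality `s1 ≤ b` comes from the socle. The socle of a graded Gorenstein quotient lies in its
socle degree, so modulo `I1 ∩ I2` every socle element of `R` is concentrated in degrees `s1`, `s2`.
If `b < s1`, it is in fact concentrated in degree `s2` (for `s1 < s2`, because `h_R(s1) = h_{R2}(s1)`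
forces `(I1 ∩ I2)_{s1} = (I2)_{s1}`), and there it is determined up to a scalar: by
`h_R(s2) = 1` if `s1 = s2`, by the socle of `R2` otherwise. This contradicts type 2.
-/

open MvPolynomial

/-- The ideal generated by the variables (the graded maximal ideal `q`). -/
noncomputable def qIdeal (k : Type*) [Field k] (e : ℕ) : Ideal (MvPolynomial (Fin e) k) :=
  Ideal.span (Set.range X)

/-- The Hilbert function of `Q/J`: `h(i) = dim_k (q^i + J)/(q^{i+1} + J)`. -/
noncomputable def hilb (k : Type*) [Field k] (e : ℕ)
    (J : Ideal (MvPolynomial (Fin e) k)) (i : ℕ) : ℕ :=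
  Module.finrank k
    (((qIdeal k e ^ i ⊔ J).map (Ideal.Quotient.mk (qIdeal k e ^ (i + 1) ⊔ J))).restrictScalars k)

/-- An ideal is homogeneous if it is generated by homogeneous polynomials. -/
def IsHomogeneousIdeal (k : Type*) [Field k] (e : ℕ)
    (J : Ideal (MvPolynomial (Fin e) k)) : Prop :=
  ∃ S : Set (MvPolynomial (Fin e) k),
    (∀ p ∈ S, ∃ n, MvPolynomial.IsHomogeneous p n) ∧ J = Ideal.span S

/-- Hilbert function of the ambient ring: `h_Q(i) = binom(e−1+i, e−1)`. -/
def hQ (e i : ℕ) : ℕ := Nat.choose (e - 1 + i) (e - 1)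

/-- `h_Q(σ − i)`, interpreted as `0` for `i > σ`. -/
def hQat (e σ i : ℕ) : ℕ := if i ≤ σ then hQ e (σ - i) else 0

/-- `Q/J` has type 1 (is artinian Gorenstein): the socle `(J : q)/J` is spanned
by one nonzero element. -/
def HasTypeOne (k : Type*) [Field k] (e : ℕ) (J : Ideal (MvPolynomial (Fin e) k)) : Prop :=
  ∃ x, x ∉ J ∧ J.colon (qIdeal k e) = J ⊔ Ideal.span {x}

/-- `Q/J` has type 2: the socle `(J : q)/J` is spanned by two elements whose
cosets are linearly independent over `k`. -/
def HasTypeTwo (k : Type*) [Field k] (e : ℕ) (J : Ideal (MvPolynomial (Fin e) k)) : Prop :=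
  ∃ x y, J.colon (qIdeal k e) = J ⊔ Ideal.span {x, y} ∧
    ∀ a b : MvPolynomial (Fin e) k, a * x + b * y ∈ J →
      a ∈ qIdeal k e ∧ b ∈ qIdeal k e

/-- `σ` is the socle degree of `Q/J`. -/
def SocDeg (k : Type*) [Field k] (e : ℕ) (J : Ideal (MvPolynomial (Fin e) k)) (σ : ℕ) : Prop :=
  ¬ qIdeal k e ^ σ ≤ J ∧ qIdeal k e ^ (σ + 1) ≤ J

/-- `τ` is the initial degree of `J`. -/
def IniDeg (k : Type*) [Field k] (e : ℕ) (J : Ideal (MvPolynomial (Fin e) k)) (τ : ℕ) : Prop :=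
  J ≤ qIdeal k e ^ τ ∧ ¬ J ≤ qIdeal k e ^ (τ + 1)

/-- `Q/J` is a compressed Gorenstein ring of socle degree `σ`. -/
def CompressedGor (k : Type*) [Field k] (e : ℕ) (J : Ideal (MvPolynomial (Fin e) k)) (σ : ℕ) : Prop :=
  ∀ i, hilb k e J i = min (hQ e i) (hQat e σ i)

attribute [local instance] MvPolynomial.gradedAlgebra

namespace MvPolynomial

section CommRing
variable {σ R : Type*} [CommRing R]

theorem homogeneousComponent_X_mul (j : σ) (p : MvPolynomial σ R) (d : ℕ) :
    homogeneousComponent (d + 1) (X j * p) = X j * homogeneousComponent d p := by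
  simpa [← decomposition.decompose'_apply] using
    DirectSum.coe_decompose_mul_of_left_mem_of_le (homogeneousSubmodule σ R) (b := p)
      ((mem_homogeneousSubmodule 1 _).2 (isHomogeneous_X R j)) (Nat.le_add_left 1 d)

theorem homogeneousComponent_eq_zero_of_mem_pow_idealOfVars {p : MvPolynomial σ R} {m d : ℕ}
    (hp : p ∈ idealOfVars σ R ^ m) (hd : d < m) : homogeneousComponent d p = 0 := by
  ext u
  rw [coeff_homogeneousComponent, coeff_zero]
  split_ifs with hu
  · exact (mem_pow_idealOfVars_iff' m p).1 hp u (hu ▸ hd)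
  · rfl

theorem sub_homogeneousComponent_mem_pow_idealOfVars {p : MvPolynomial σ R} {n : ℕ}
    (hp : p ∈ idealOfVars σ R ^ n) : p - homogeneousComponent n p ∈ idealOfVars σ R ^ (n + 1) := by
  rw [mem_pow_idealOfVars_iff']
  intro u hu
  rw [coeff_sub, coeff_homogeneousComponent]
  split_ifs with hun
  · exact sub_self _
  · rw [(mem_pow_idealOfVars_iff' n p).1 hp u (by omega), sub_zero]

theorem IsHomogeneous.mem_pow_idealOfVars {p : MvPolynomial σ R} {m n : ℕ}
    (hp : p.IsHomogeneous n) (hm : m ≤ n) : p ∈ idealOfVars σ R ^ m := by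
  rw [mem_pow_idealOfVars_iff]
  intro u hu
  have := hp.degree_eq_sum_deg_support hu
  rw [Finsupp.degree_apply]
  omega

theorem _root_.Ideal.IsHomogeneous.sub_homogeneousComponent_mem {J : Ideal (MvPolynomial σ R)}
    (hJ : J.IsHomogeneous (homogeneousSubmodule σ R)) {p : MvPolynomial σ R} {n : ℕ}
    (h : ∀ d ≠ n, homogeneousComponent d p ∈ J) : p - homogeneousComponent n p ∈ J := by
  rw [mem_iff_homogeneousComponent_mem hJ]
  intro d
  rw [map_sub, homogeneousComponent_of_mem (homogeneousComponent_mem n p)]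
  split_ifs with hd
  · rw [hd, sub_self]; exact J.zero_mem
  · rw [sub_zero]; exact h d hd

end CommRing

section Field
variable {σ K : Type*} [Field K]

instance [Finite σ] (n : ℕ) : FiniteDimensional K (homogeneousSubmodule σ K n) :=
  Module.Finite.iff_fg.2 (homogeneousSubmodule_fg σ K n)

theorem finrank_homogeneousSubmodule [Fintype σ] (n : ℕ) :
    Module.finrank K (homogeneousSubmodule σ K n) = (Fintype.card σ + n - 1).choose n := by
  classical
  have hs : {d : σ →₀ ℕ | d.degree = n} =
      ((Finset.univ.finsuppAntidiag n : Finset (σ →₀ ℕ)) : Set (σ →₀ ℕ)) := by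
    ext d
    simp [Finset.mem_finsuppAntidiag, Finsupp.degree_eq_sum]
  rw [homogeneousSubmodule_eq_finsupp_supported, hs,
    (AddMonoidAlgebra.supportedEquivFinsupp _).finrank_eq, Module.finrank_finsupp_self]
  simp [Finset.card_finsuppAntidiag_nat_eq_choose]

end Field

end MvPolynomial

theorem Submodule.exists_smul_add_smul_mem_of_finrank_quotient_le_one {K V : Type*} [Field K]
    [AddCommGroup V] [Module K V] {U : Submodule K V} [FiniteDimensional K (V ⧸ U)]
    (h : Module.finrank K (V ⧸ U) ≤ 1) (z w : V) :
    ∃ a b : K, (a ≠ 0 ∨ b ≠ 0) ∧ a • z + b • w ∈ U := by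
  have hdep : ¬ LinearIndependent K ![U.mkQ z, U.mkQ w] := fun hli => by
    simpa using hli.fintype_card_le_finrank.trans h
  rw [LinearIndependent.pair_iff] at hdep
  push Not at hdep
  obtain ⟨a, b, hab, hne⟩ := hdep
  refine ⟨a, b, by tauto, ?_⟩
  rwa [← map_smul, ← map_smul, ← map_add, Submodule.mkQ_apply,
    Submodule.Quotient.mk_eq_zero] at hab

section
variable {k : Type*} [Field k] {e : ℕ}

theorem qIdeal_eq_idealOfVars : qIdeal k e = idealOfVars (Fin e) k := rfl

theorem IsHomogeneousIdeal.isHomogeneous {J : Ideal (MvPolynomial (Fin e) k)}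
    (hJ : IsHomogeneousIdeal k e J) : J.IsHomogeneous (homogeneousSubmodule (Fin e) k) := by
  obtain ⟨S, hS, rfl⟩ := hJ
  refine Ideal.homogeneous_span _ _ fun p hp => ?_
  obtain ⟨n, hn⟩ := hS p hp
  exact ⟨n, (mem_homogeneousSubmodule n p).2 hn⟩

theorem hQ_eq_finrank (he : 1 ≤ e) (i : ℕ) :
    hQ e i = Module.finrank k (homogeneousSubmodule (Fin e) k i) := by
  rw [finrank_homogeneousSubmodule, Fintype.card_fin, hQ, show e + i - 1 = e - 1 + i by omega,
    Nat.choose_symm_add]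

theorem C_mem_qIdeal_iff {c : k} : (C c : MvPolynomial (Fin e) k) ∈ qIdeal k e ↔ c = 0 := by
  simpa [qIdeal_eq_idealOfVars] using C_mem_pow_idealOfVars_iff (σ := Fin e) 1 c

theorem mem_colon_qIdeal_iff {J : Ideal (MvPolynomial (Fin e) k)} {z : MvPolynomial (Fin e) k} :
    z ∈ J.colon (qIdeal k e) ↔ ∀ j, X j * z ∈ J := by
  simp [qIdeal, Submodule.mem_colon, mul_comm]

theorem homogeneousComponent_mem_colon {J : Ideal (MvPolynomial (Fin e) k)}
    (hJ : J.IsHomogeneous (homogeneousSubmodule (Fin e) k)) {z : MvPolynomial (Fin e) k}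
    (hz : z ∈ J.colon (qIdeal k e)) (d : ℕ) : homogeneousComponent d z ∈ J.colon (qIdeal k e) := by
  rw [mem_colon_qIdeal_iff] at hz ⊢
  intro j
  rw [← homogeneousComponent_X_mul]
  exact homogeneousComponent_mem_of_mem hJ (hz j) _

noncomputable def homogeneousPart (J : Ideal (MvPolynomial (Fin e) k)) (i : ℕ) :
    Submodule k (homogeneousSubmodule (Fin e) k i) :=
  (J.restrictScalars k).comap (homogeneousSubmodule (Fin e) k i).subtype

theorem mem_homogeneousPart {J : Ideal (MvPolynomial (Fin e) k)} {i : ℕ}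
    {w : homogeneousSubmodule (Fin e) k i} :
    w ∈ homogeneousPart J i ↔ (w : MvPolynomial (Fin e) k) ∈ J :=
  Iff.rfl

noncomputable def reduceForms (J : Ideal (MvPolynomial (Fin e) k)) (i : ℕ) :
    homogeneousSubmodule (Fin e) k i →ₗ[k] MvPolynomial (Fin e) k ⧸ (qIdeal k e ^ (i + 1) ⊔ J) :=
  (Ideal.Quotient.mkₐ k _).toLinearMap ∘ₗ (homogeneousSubmodule (Fin e) k i).subtype

theorem range_reduceForms (J : Ideal (MvPolynomial (Fin e) k)) (i : ℕ) :
    LinearMap.range (reduceForms J i) =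
      ((qIdeal k e ^ i ⊔ J).map
        (Ideal.Quotient.mk (qIdeal k e ^ (i + 1) ⊔ J))).restrictScalars k := by
  apply le_antisymm
  · rintro _ ⟨w, rfl⟩
    exact Ideal.mem_map_of_mem _ (Ideal.mem_sup_left
      (((mem_homogeneousSubmodule i _).1 w.2).mem_pow_idealOfVars le_rfl))
  · intro x hx
    obtain ⟨p, hp, rfl⟩ := (Ideal.mem_map_iff_of_surjective _ Ideal.Quotient.mk_surjective).1 hx
    obtain ⟨a, ha, f, hf, rfl⟩ := Submodule.mem_sup.1 hp
    refine ⟨⟨homogeneousComponent i a, homogeneousComponent_mem i a⟩, Ideal.Quotient.eq.2 ?_⟩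
    change homogeneousComponent i a - (a + f) ∈ _
    rw [show homogeneousComponent i a - (a + f) = -((a - homogeneousComponent i a) + f) by ring]
    exact neg_mem (Ideal.add_mem _
      (Ideal.mem_sup_left (sub_homogeneousComponent_mem_pow_idealOfVars ha))
      (Ideal.mem_sup_right hf))

theorem ker_reduceForms {J : Ideal (MvPolynomial (Fin e) k)}
    (hJ : J.IsHomogeneous (homogeneousSubmodule (Fin e) k)) (i : ℕ) :
    LinearMap.ker (reduceForms J i) = homogeneousPart J i := by
  ext w
  change Ideal.Quotient.mk _ (w : MvPolynomial (Fin e) k) = 0 ↔ _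
  rw [Ideal.Quotient.eq_zero_iff_mem, mem_homogeneousPart]
  refine ⟨fun hw => ?_, Ideal.mem_sup_right⟩
  obtain ⟨a, ha, f, hf, hw⟩ := Submodule.mem_sup.1 hw
  rw [← homogeneousComponent_of_mem w.2 |>.trans (if_pos rfl), ← hw, map_add,
    homogeneousComponent_eq_zero_of_mem_pow_idealOfVars ha (Nat.lt_succ_self i), zero_add]
  exact homogeneousComponent_mem_of_mem hJ hf i

theorem hilb_eq_finrank_quotient {J : Ideal (MvPolynomial (Fin e) k)}
    (hJ : J.IsHomogeneous (homogeneousSubmodule (Fin e) k)) (i : ℕ) :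
    hilb k e J i = Module.finrank k (homogeneousSubmodule (Fin e) k i ⧸ homogeneousPart J i) := by
  rw [hilb, ← range_reduceForms, ← ker_reduceForms hJ,
    (LinearMap.quotKerEquivRange (reduceForms J i)).finrank_eq]

theorem hilb_add_finrank_homogeneousPart (he : 1 ≤ e) {J : Ideal (MvPolynomial (Fin e) k)}
    (hJ : J.IsHomogeneous (homogeneousSubmodule (Fin e) k)) (i : ℕ) :
    hilb k e J i + Module.finrank k (homogeneousPart J i) = hQ e i := by
  rw [hilb_eq_finrank_quotient hJ, Submodule.finrank_quotient_add_finrank,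
    hQ_eq_finrank (k := k) he]

theorem homogeneousPart_inf (I J : Ideal (MvPolynomial (Fin e) k)) (i : ℕ) :
    homogeneousPart (I ⊓ J) i = homogeneousPart I i ⊓ homogeneousPart J i :=
  rfl

theorem hilb_inf_le (he : 1 ≤ e) {I J : Ideal (MvPolynomial (Fin e) k)}
    (hI : I.IsHomogeneous (homogeneousSubmodule (Fin e) k))
    (hJ : J.IsHomogeneous (homogeneousSubmodule (Fin e) k)) (i : ℕ) :
    hilb k e (I ⊓ J) i ≤ hilb k e I i + hilb k e J i := by
  have hIJ := hilb_add_finrank_homogeneousPart he (hI.inf hJ) i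
  have hI' := hilb_add_finrank_homogeneousPart he hI i
  have hJ' := hilb_add_finrank_homogeneousPart he hJ i
  have hsum := Submodule.finrank_sup_add_finrank_inf_eq (homogeneousPart I i) (homogeneousPart J i)
  have hsup := Submodule.finrank_le (homogeneousPart I i ⊔ homogeneousPart J i)
  rw [homogeneousPart_inf] at hIJ
  rw [← hQ_eq_finrank he] at hsup
  omega

theorem hilb_eq_hQ_of_le_pow (he : 1 ≤ e) {J : Ideal (MvPolynomial (Fin e) k)}
    (hJ : J.IsHomogeneous (homogeneousSubmodule (Fin e) k)) {i : ℕ}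
    (h : J ≤ qIdeal k e ^ (i + 1)) : hilb k e J i = hQ e i := by
  have hbot : homogeneousPart J i = ⊥ := by
    refine (Submodule.eq_bot_iff _).2 fun w hw => Subtype.ext ?_
    rw [← homogeneousComponent_eq_self ((mem_homogeneousSubmodule i _).1 w.2)]
    exact homogeneousComponent_eq_zero_of_mem_pow_idealOfVars (h hw) (Nat.lt_succ_self i)
  have := hilb_add_finrank_homogeneousPart he hJ i
  rwa [hbot, finrank_bot, add_zero] at this

theorem hilb_lt_hQ_of_not_le_pow (he : 1 ≤ e) {J : Ideal (MvPolynomial (Fin e) k)}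
    (hJ : J.IsHomogeneous (homogeneousSubmodule (Fin e) k)) {i : ℕ}
    (h : J ≤ qIdeal k e ^ i) (h' : ¬ J ≤ qIdeal k e ^ (i + 1)) : hilb k e J i < hQ e i := by
  obtain ⟨f, hfJ, hf⟩ := SetLike.not_le_iff_exists.1 h'
  have hne : homogeneousComponent i f ≠ 0 := fun h0 =>
    hf (by simpa [h0, qIdeal_eq_idealOfVars] using
      sub_homogeneousComponent_mem_pow_idealOfVars (h hfJ))
  have hpos : 0 < Module.finrank k (homogeneousPart J i) := by
    let g : homogeneousPart J i :=
      ⟨⟨homogeneousComponent i f, homogeneousComponent_mem i f⟩,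
        homogeneousComponent_mem_of_mem hJ hfJ i⟩
    exact (Module.finrank_pos_iff_exists_ne_zero (R := k)).2
      ⟨g, by simpa [g, Subtype.ext_iff] using hne⟩
  have := hilb_add_finrank_homogeneousPart he hJ i
  omega

theorem IniDeg.eq_sInf (he : 1 ≤ e) {J : Ideal (MvPolynomial (Fin e) k)}
    (hJ : J.IsHomogeneous (homogeneousSubmodule (Fin e) k)) {t : ℕ} (ht : IniDeg k e J t)
    {f : ℕ → ℕ} (hf : ∀ i, hilb k e J i = min (hQ e i) (f i)) :
    t = sInf {i | f i < hQ e i} := by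
  refine (IsLeast.csInf_eq ⟨?_, fun i hi => ?_⟩).symm
  · have := hilb_lt_hQ_of_not_le_pow he hJ ht.1 ht.2
    have := hf t
    simp only [Set.mem_ofPred_eq]
    omega
  · by_contra! hit
    have := hilb_eq_hQ_of_le_pow he hJ (ht.1.trans (Ideal.pow_le_pow_right hit))
    have := hf i
    simp only [Set.mem_ofPred_eq] at hi
    omega

theorem mem_of_hilb_eq (he : 1 ≤ e) {I J : Ideal (MvPolynomial (Fin e) k)}
    (hI : I.IsHomogeneous (homogeneousSubmodule (Fin e) k))
    (hJ : J.IsHomogeneous (homogeneousSubmodule (Fin e) k)) (hIJ : I ≤ J) {i : ℕ}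
    (h : hilb k e I i = hilb k e J i) {z : MvPolynomial (Fin e) k} (hz : z.IsHomogeneous i)
    (hzJ : z ∈ J) : z ∈ I := by
  have hle : homogeneousPart I i ≤ homogeneousPart J i := fun w hw => hIJ hw
  have heq := Submodule.eq_of_le_of_finrank_eq hle (by
    have := hilb_add_finrank_homogeneousPart he hI i
    have := hilb_add_finrank_homogeneousPart he hJ i
    omega)
  have hmem : (⟨z, (mem_homogeneousSubmodule i z).2 hz⟩ : homogeneousSubmodule (Fin e) k i) ∈
      homogeneousPart J i := hzJ
  rw [← heq] at hmem
  exact hmem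

def DependentMod (J : Ideal (MvPolynomial (Fin e) k)) (z w : MvPolynomial (Fin e) k) : Prop :=
  ∃ a b : k, (a ≠ 0 ∨ b ≠ 0) ∧ C a * z + C b * w ∈ J

theorem dependentMod_of_hilb_le_one {J : Ideal (MvPolynomial (Fin e) k)}
    (hJ : J.IsHomogeneous (homogeneousSubmodule (Fin e) k)) {i : ℕ} (h : hilb k e J i ≤ 1)
    {z w : MvPolynomial (Fin e) k} (hz : z.IsHomogeneous i) (hw : w.IsHomogeneous i) :
    DependentMod J z w := by
  rw [hilb_eq_finrank_quotient hJ] at h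
  obtain ⟨a, b, hab, hmem⟩ := Submodule.exists_smul_add_smul_mem_of_finrank_quotient_le_one h
    ⟨z, (mem_homogeneousSubmodule i z).2 hz⟩ ⟨w, (mem_homogeneousSubmodule i w).2 hw⟩
  refine ⟨a, b, hab, ?_⟩
  simpa [mem_homogeneousPart, smul_eq_C_mul] using hmem

theorem SocDeg.unique {J : Ideal (MvPolynomial (Fin e) k)} {σ τ : ℕ} (hσ : SocDeg k e J σ)
    (hτ : SocDeg k e J τ) : σ = τ := by
  by_contra hne
  rcases Nat.lt_or_gt_of_ne hne with h | h
  · exact hτ.1 ((Ideal.pow_le_pow_right h).trans hσ.2)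
  · exact hσ.1 ((Ideal.pow_le_pow_right h).trans hτ.2)

theorem SocDeg.inf {I J : Ideal (MvPolynomial (Fin e) k)} {σ τ : ℕ} (hI : SocDeg k e I σ)
    (hJ : SocDeg k e J τ) (h : σ ≤ τ) : SocDeg k e (I ⊓ J) τ :=
  ⟨fun hle => hJ.1 (hle.trans inf_le_right),
    le_inf ((Ideal.pow_le_pow_right (Nat.succ_le_succ h)).trans hI.2) hJ.2⟩

theorem C_mul_mem_iff {I : Ideal (MvPolynomial (Fin e) k)} {c : k} (hc : c ≠ 0)
    {p : MvPolynomial (Fin e) k} : C c * p ∈ I ↔ p ∈ I :=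
  Ideal.unit_mul_mem_iff_mem I (hc.isUnit.map C)

theorem mul_mem_of_mem_colon {I : Ideal (MvPolynomial (Fin e) k)} {x p : MvPolynomial (Fin e) k}
    (hx : x ∈ I.colon (qIdeal k e)) (hp : p ∈ qIdeal k e) : p * x ∈ I := by
  simpa [mul_comm] using Submodule.mem_colon.1 hx p hp

theorem sub_C_constantCoeff_mem_qIdeal (f : MvPolynomial (Fin e) k) :
    f - C (constantCoeff f) ∈ qIdeal k e := by
  rw [qIdeal_eq_idealOfVars, ← pow_one (idealOfVars _ _), mem_pow_idealOfVars_iff']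
  intro u hu
  obtain rfl : u = 0 := (Finsupp.degree_eq_zero_iff u).1 (by omega)
  simp [constantCoeff_eq]

theorem exists_sub_C_mul_mem {I : Ideal (MvPolynomial (Fin e) k)} {x z : MvPolynomial (Fin e) k}
    (hx : x ∈ I.colon (qIdeal k e)) (hz : z ∈ I ⊔ Ideal.span {x}) : ∃ c : k, z - C c * x ∈ I := by
  obtain ⟨a, ha, b, hb, rfl⟩ := Submodule.mem_sup.1 hz
  obtain ⟨f, rfl⟩ := Ideal.mem_span_singleton'.1 hb
  refine ⟨constantCoeff f, ?_⟩
  rw [show a + f * x - C (constantCoeff f) * x = a + (f - C (constantCoeff f)) * x by ring]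
  exact I.add_mem ha (mul_mem_of_mem_colon hx (sub_C_constantCoeff_mem_qIdeal f))

theorem DependentMod.of_sub_mem {J : Ideal (MvPolynomial (Fin e) k)}
    {z w z' w' : MvPolynomial (Fin e) k} (h : DependentMod J z' w') (hz : z - z' ∈ J)
    (hw : w - w' ∈ J) : DependentMod J z w := by
  obtain ⟨a, b, hab, hmem⟩ := h
  refine ⟨a, b, hab, ?_⟩
  rw [show C a * z + C b * w = (C a * z' + C b * w') + (C a * (z - z') + C b * (w - w')) by ring]
  exact J.add_mem hmem (J.add_mem (J.mul_mem_left _ hz) (J.mul_mem_left _ hw))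

theorem HasTypeOne.dependentMod {I : Ideal (MvPolynomial (Fin e) k)} (h : HasTypeOne k e I)
    {z w : MvPolynomial (Fin e) k} (hz : z ∈ I.colon (qIdeal k e)) (hw : w ∈ I.colon (qIdeal k e)) :
    DependentMod I z w := by
  obtain ⟨x, -, hcol⟩ := h
  have hx : x ∈ I.colon (qIdeal k e) := hcol ▸ Ideal.mem_sup_right (Ideal.mem_span_singleton_self x)
  obtain ⟨c, hc⟩ := exists_sub_C_mul_mem hx (hcol ▸ hz)
  obtain ⟨c', hc'⟩ := exists_sub_C_mul_mem hx (hcol ▸ hw)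
  by_cases hc0 : c = 0
  · exact ⟨1, 0, Or.inl one_ne_zero, by simpa [hc0] using hc⟩
  · refine ⟨c', -c, Or.inr (neg_ne_zero.2 hc0), ?_⟩
    rw [show C c' * z + C (-c) * w = C c' * (z - C c * x) - C c * (w - C c' * x) by
      rw [C_neg]; ring]
    exact I.sub_mem (I.mul_mem_left _ hc) (I.mul_mem_left _ hc')

theorem not_hasTypeTwo_of_dependentMod {J : Ideal (MvPolynomial (Fin e) k)}
    (h : ∀ z ∈ J.colon (qIdeal k e), ∀ w ∈ J.colon (qIdeal k e), DependentMod J z w) :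
    ¬ HasTypeTwo k e J := by
  rintro ⟨x, y, hcol, hind⟩
  have hx : x ∈ J.colon (qIdeal k e) := hcol ▸ Ideal.mem_sup_right (Ideal.subset_span (by simp))
  have hy : y ∈ J.colon (qIdeal k e) := hcol ▸ Ideal.mem_sup_right (Ideal.subset_span (by simp))
  obtain ⟨a, b, hab, hmem⟩ := h x hx y hy
  obtain ⟨ha, hb⟩ := hind _ _ hmem
  rw [C_mem_qIdeal_iff] at ha hb
  tauto

theorem SocDeg.exists_isHomogeneous_mem_colon_not_mem {I : Ideal (MvPolynomial (Fin e) k)}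
    {σ : ℕ} (h : SocDeg k e I σ) :
    ∃ w : MvPolynomial (Fin e) k, w.IsHomogeneous σ ∧ w ∈ I.colon (qIdeal k e) ∧ w ∉ I := by
  obtain ⟨g, hg, hgI⟩ := SetLike.not_le_iff_exists.1 h.1
  refine ⟨homogeneousComponent σ g, homogeneousComponent_isHomogeneous σ g, ?_,
    fun hmem => hgI ?_⟩
  · refine mem_colon_qIdeal_iff.2 fun j => h.2 ?_
    exact ((isHomogeneous_X k j).mul (homogeneousComponent_isHomogeneous σ g)).mem_pow_idealOfVars
      (by omega)
  · simpa using I.add_mem (h.2 (sub_homogeneousComponent_mem_pow_idealOfVars hg)) hmem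

theorem HasTypeOne.mem_of_isHomogeneous {I : Ideal (MvPolynomial (Fin e) k)}
    (hI : I.IsHomogeneous (homogeneousSubmodule (Fin e) k)) (h : HasTypeOne k e I) {σ : ℕ}
    (hσ : SocDeg k e I σ) {z : MvPolynomial (Fin e) k} {d : ℕ} (hz : z.IsHomogeneous d)
    (hzc : z ∈ I.colon (qIdeal k e)) (hd : d ≠ σ) : z ∈ I := by
  obtain ⟨w, hw, hwc, hwI⟩ := hσ.exists_isHomogeneous_mem_colon_not_mem
  obtain ⟨a, b, hab, hmem⟩ := h.dependentMod hzc hwc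
  have hbw : C b * w ∈ I := by
    simpa [homogeneousComponent_eq_self hw, homogeneousComponent_of_mem hz, Ne.symm hd] using
      homogeneousComponent_mem_of_mem hI hmem σ
  obtain rfl : b = 0 := by
    by_contra hb
    exact hwI ((C_mul_mem_iff hb).1 hbw)
  have ha : a ≠ 0 := by tauto
  exact (C_mul_mem_iff ha).1 (by simpa using hmem)

theorem homogeneousComponent_mem_inf_of_mem_colon {I1 I2 : Ideal (MvPolynomial (Fin e) k)}
    (hI1 : I1.IsHomogeneous (homogeneousSubmodule (Fin e) k))
    (hI2 : I2.IsHomogeneous (homogeneousSubmodule (Fin e) k))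
    (h1 : HasTypeOne k e I1) (h2 : HasTypeOne k e I2) {s1 s2 : ℕ}
    (hs1 : SocDeg k e I1 s1) (hs2 : SocDeg k e I2 s2) {z : MvPolynomial (Fin e) k}
    (hz : z ∈ (I1 ⊓ I2).colon (qIdeal k e)) {d : ℕ} (hd1 : d ≠ s1) (hd2 : d ≠ s2) :
    homogeneousComponent d z ∈ I1 ⊓ I2 := by
  have hzd := homogeneousComponent_mem_colon (hI1.inf hI2) hz d
  exact ⟨h1.mem_of_isHomogeneous hI1 hs1 (homogeneousComponent_isHomogeneous d z)
      (Submodule.colon_mono inf_le_left le_rfl hzd) hd1,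
    h2.mem_of_isHomogeneous hI2 hs2 (homogeneousComponent_isHomogeneous d z)
      (Submodule.colon_mono inf_le_right le_rfl hzd) hd2⟩

theorem dependentMod_inf_of_socDeg_eq {I1 I2 : Ideal (MvPolynomial (Fin e) k)}
    (hI1 : I1.IsHomogeneous (homogeneousSubmodule (Fin e) k))
    (hI2 : I2.IsHomogeneous (homogeneousSubmodule (Fin e) k))
    (h1 : HasTypeOne k e I1) (h2 : HasTypeOne k e I2) {s : ℕ}
    (hs1 : SocDeg k e I1 s) (hs2 : SocDeg k e I2 s) (h : hilb k e (I1 ⊓ I2) s ≤ 1)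
    {z w : MvPolynomial (Fin e) k} (hz : z ∈ (I1 ⊓ I2).colon (qIdeal k e))
    (hw : w ∈ (I1 ⊓ I2).colon (qIdeal k e)) : DependentMod (I1 ⊓ I2) z w := by
  have hJ := hI1.inf hI2
  have hrest : ∀ p ∈ (I1 ⊓ I2).colon (qIdeal k e), p - homogeneousComponent s p ∈ I1 ⊓ I2 :=
    fun p hp => hJ.sub_homogeneousComponent_mem fun d hd =>
      homogeneousComponent_mem_inf_of_mem_colon hI1 hI2 h1 h2 hs1 hs2 hp hd hd
  exact (dependentMod_of_hilb_le_one hJ h (homogeneousComponent_isHomogeneous s z)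
    (homogeneousComponent_isHomogeneous s w)).of_sub_mem (hrest z hz) (hrest w hw)

theorem dependentMod_inf_of_socDeg_lt (he : 1 ≤ e) {I1 I2 : Ideal (MvPolynomial (Fin e) k)}
    (hI1 : I1.IsHomogeneous (homogeneousSubmodule (Fin e) k))
    (hI2 : I2.IsHomogeneous (homogeneousSubmodule (Fin e) k))
    (h1 : HasTypeOne k e I1) (h2 : HasTypeOne k e I2) {s1 s2 : ℕ}
    (hs1 : SocDeg k e I1 s1) (hs2 : SocDeg k e I2 s2) (hlt : s1 < s2)
    (h : hilb k e (I1 ⊓ I2) s1 = hilb k e I2 s1)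
    {z w : MvPolynomial (Fin e) k} (hz : z ∈ (I1 ⊓ I2).colon (qIdeal k e))
    (hw : w ∈ (I1 ⊓ I2).colon (qIdeal k e)) : DependentMod (I1 ⊓ I2) z w := by
  have hJ := hI1.inf hI2
  have hcolon : ∀ p ∈ (I1 ⊓ I2).colon (qIdeal k e), ∀ d,
      homogeneousComponent d p ∈ I2.colon (qIdeal k e) := fun p hp d =>
    Submodule.colon_mono inf_le_right le_rfl (homogeneousComponent_mem_colon hJ hp d)
  have hrest : ∀ p ∈ (I1 ⊓ I2).colon (qIdeal k e), p - homogeneousComponent s2 p ∈ I1 ⊓ I2 := by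
    refine fun p hp => hJ.sub_homogeneousComponent_mem fun d hd => ?_
    by_cases hd1 : d = s1
    · subst hd1
      exact mem_of_hilb_eq he hJ hI2 inf_le_right h (homogeneousComponent_isHomogeneous d p)
        (h2.mem_of_isHomogeneous hI2 hs2 (homogeneousComponent_isHomogeneous d p)
          (hcolon p hp d) hlt.ne)
    · exact homogeneousComponent_mem_inf_of_mem_colon hI1 hI2 h1 h2 hs1 hs2 hp hd1 hd
  have htop : ∀ p, homogeneousComponent s2 p ∈ I1 := fun p =>
    hs1.2 ((homogeneousComponent_isHomogeneous s2 p).mem_pow_idealOfVars hlt)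
  obtain ⟨a, b, hab, hmem⟩ := h2.dependentMod (hcolon z hz s2) (hcolon w hw s2)
  exact DependentMod.of_sub_mem
    ⟨a, b, hab, I1.add_mem (I1.mul_mem_left _ (htop z)) (I1.mul_mem_left _ (htop w)), hmem⟩
    (hrest z hz) (hrest w hw)

end

theorem hQat_of_lt {e σ i : ℕ} (h : σ < i) : hQat e σ i = 0 :=
  if_neg (by omega)

theorem hQat_self (e σ : ℕ) : hQat e σ σ = 1 := by
  simp [hQat, hQ]

theorem hQat_mono {e σ τ : ℕ} (h : σ ≤ τ) (i : ℕ) : hQat e σ i ≤ hQat e τ i := by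
  unfold hQat
  split_ifs with hσ hτ
  · exact Nat.choose_le_choose _ (by omega)
  · omega
  · exact Nat.zero_le _
  · exact le_rfl

theorem stmt11_general (k : Type*) [Field k] (e : ℕ) (he : 3 ≤ e)
    (I1 I2 : Ideal (MvPolynomial (Fin e) k))
    (h1hom : IsHomogeneousIdeal k e I1) (h2hom : IsHomogeneousIdeal k e I2)
    (h1gor : HasTypeOne k e I1) (h2gor : HasTypeOne k e I2)
    (s1 s2 s t : ℕ)
    (hs1 : SocDeg k e I1 s1) (hs2 : SocDeg k e I2 s2) (hle : s1 ≤ s2)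
    (h1c : CompressedGor k e I1 s1) (h2c : CompressedGor k e I2 s2)
    (htype2 : HasTypeTwo k e (I1 ⊓ I2))
    (hs : SocDeg k e (I1 ⊓ I2) s)
    (ht : IniDeg k e (I1 ⊓ I2) t)
    -- `R` is compressed: for the socle polynomial `χ^b + χ^s` of `R`
    (hcomp : ∃ b ≤ s, ∀ i,
      hilb k e (I1 ⊓ I2) i = min (hQ e i) (hQat e b i + hQat e s i)) :
    (∀ i, hilb k e (I1 ⊓ I2) i = min (hQ e i) (hilb k e I1 i + hilb k e I2 i)) ∧
    t = sInf {i : ℕ | hilb k e I1 i + hilb k e I2 i < hQ e i} := by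
  have he1 : 1 ≤ e := by omega
  have hI1 := h1hom.isHomogeneous
  have hI2 := h2hom.isHomogeneous
  obtain rfl : s = s2 := hs.unique (hs1.inf hs2 hle)
  obtain ⟨b, hbs, hb⟩ := hcomp
  have hb1 : s1 ≤ b := by
    by_contra! hb1
    refine not_hasTypeTwo_of_dependentMod (fun z hz w hw => ?_) htype2
    have hbs1 := hb s1
    rw [hQat_of_lt hb1, zero_add] at hbs1
    rcases hle.eq_or_lt with rfl | hlt
    · rw [hQat_self] at hbs1
      exact dependentMod_inf_of_socDeg_eq hI1 hI2 h1gor h2gor hs1 hs2 (by omega) hz hw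
    · exact dependentMod_inf_of_socDeg_lt he1 hI1 hI2 h1gor h2gor hs1 hs2 hlt
        (by rw [hbs1, h2c s1]) hz hw
  have hsum : ∀ i, hilb k e (I1 ⊓ I2) i = min (hQ e i) (hilb k e I1 i + hilb k e I2 i) := by
    intro i
    have := hilb_inf_le he1 hI1 hI2 i
    have := hQat_mono (e := e) hb1 i
    have := hQat_mono (e := e) hbs i
    have := hb i
    have := h1c i
    have := h2c i
    omega
  exact ⟨hsum, ht.eq_sInf he1 (hI1.inf hI2) hsum⟩

/-- In the setup of two homogeneous `q`-primary ideals with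
compressed Gorenstein quotients `R1, R2` of socle degrees `s1 ≤ s2` in `e ≥ 3`
variables, if `R = Q/(I1 ∩ I2)` is compressed of type 2 with socle degree `s`
and initial degree `t`, then `h_R(i) = min{h_Q(i), h_{R1}(i) + h_{R2}(i)}` for
all `i`, and `t = min{ i : h_Q(i) > h_{R1}(i) + h_{R2}(i) }`. -/
theorem stmt11 (k : Type*) [Field k] (e : ℕ) (he : 3 ≤ e)
    (I1 I2 : Ideal (MvPolynomial (Fin e) k))
    (h1hom : IsHomogeneousIdeal k e I1) (h2hom : IsHomogeneousIdeal k e I2)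
    (h1p : I1.IsPrimary) (h1r : I1.radical = qIdeal k e)
    (h2p : I2.IsPrimary) (h2r : I2.radical = qIdeal k e)
    (h1q2 : I1 ≤ qIdeal k e ^ 2) (h2q2 : I2 ≤ qIdeal k e ^ 2)
    (h1gor : HasTypeOne k e I1) (h2gor : HasTypeOne k e I2)
    (s1 s2 s t : ℕ)
    (hs1 : SocDeg k e I1 s1) (hs2 : SocDeg k e I2 s2) (hle : s1 ≤ s2)
    (h1c : CompressedGor k e I1 s1) (h2c : CompressedGor k e I2 s2)
    (htype2 : HasTypeTwo k e (I1 ⊓ I2))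
    (hs : SocDeg k e (I1 ⊓ I2) s)
    (ht : IniDeg k e (I1 ⊓ I2) t)
    -- `R` is compressed: for the socle polynomial `χ^b + χ^s` of `R`
    (hcomp : ∃ b ≤ s, ∀ i,
      hilb k e (I1 ⊓ I2) i = min (hQ e i) (hQat e b i + hQat e s i)) :
    (∀ i, hilb k e (I1 ⊓ I2) i = min (hQ e i) (hilb k e I1 i + hilb k e I2 i)) ∧
    t = sInf {i : ℕ | hilb k e I1 i + hilb k e I2 i < hQ e i} :=
  stmt11_general k e he I1 I2 h1hom h2hom h1gor h2gor s1 s2 s t hs1 hs2 hle h1c h2c htype2 hs ht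
    hcomp
end

section
/- In the setup of two homogeneous compressed Gorenstein ideals I1, I2 in the power series ring in e ≥ 3 variables with R = Q/(I1 ∩ I2) compressed of type 2, the socle polynomial of R is χ^{s1} + χ^{s}, and a = min{ i ≥ 0 : q^i I2 ⊆ I1 } equals s1 − t2 + 1, where s1 is the socle degree of R1 = Q/I1, s is the socle degree of R, and t2 is the initial degree of I2. -/
/-!
Everything is graded, so socle elements may be taken homogeneous, and the socle of the Gorenstein
ring `Q/I1` lives in degree `s1` only. Hence a homogeneous element of `I2 \ I1` of maximal degree
is a socle element of `R` of valuation `s1`; it is completed to a socle basis by a homogeneous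
socle element of degree `s = s2` when `s1 < s2`, and by one of the given socle generators when
`s1 = s2`, where the whole socle of `R` lies in `q^s`.

For `a`, the inclusion `q^(s1-t2+1) I2 ⊆ q^(s1+1) ⊆ I1` is clear. If `q^(s1-t2) I2 ⊆ I1`,
duality in `Q/I1` forces every form of degree `t2` of `I2` into `I1`, so `R` and `Q/I2` have the
same Hilbert function in degree `t2`. But the two Hilbert functions also agree above the second
socle degree `b` of `R`, which forces `t2 ≤ b`; then compressedness of `R` makes `h_R(t2)`
strictly larger than `h_{Q/I2}(t2) = h_Q(s2 - t2) < h_Q(t2)`.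
-/

open MvPolynomial

namespace CompressedGorenstein

attribute [local instance] MvPolynomial.gradedAlgebra

section GradedPieces

variable {σ R : Type*} [CommSemiring R]

theorem coe_decompose_homogeneousSubmodule (p : MvPolynomial σ R) (n : ℕ) :
    (DirectSum.decompose (homogeneousSubmodule σ R) p n : MvPolynomial σ R) =
      homogeneousComponent n p :=
  decomposition.decompose'_apply p n

theorem isHomogeneous_iff_forall_homogeneousComponent_mem {J : Ideal (MvPolynomial σ R)} :
    J.IsHomogeneous (homogeneousSubmodule σ R) ↔
      ∀ p ∈ J, ∀ n, homogeneousComponent n p ∈ J := by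
  refine ⟨fun hJ p hp n => homogeneousComponent_mem_of_mem hJ hp n, fun h n p hp => ?_⟩
  rw [coe_decompose_homogeneousSubmodule]
  exact h p hp n

theorem homogeneousComponent_mul_of_isHomogeneous {f : MvPolynomial σ R} {t : ℕ}
    (hf : f.IsHomogeneous t) (g : MvPolynomial σ R) (n : ℕ) :
    homogeneousComponent (n + t) (g * f) = homogeneousComponent n g * f := by
  simpa only [coe_decompose_homogeneousSubmodule] using
    DirectSum.coe_decompose_mul_add_of_right_mem (homogeneousSubmodule σ R) (a := g) (i := n) hf

end GradedPieces

variable {k : Type*} [Field k] {e : ℕ}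

local notation "𝔮" => qIdeal k e
local notation "𝒜" => homogeneousSubmodule (Fin e) k

section QAdic

theorem mem_qIdeal_pow_iff {m : ℕ} {p : MvPolynomial (Fin e) k} :
    p ∈ 𝔮 ^ m ↔ ∀ d : Fin e →₀ ℕ, d.degree < m → coeff d p = 0 :=
  mem_pow_idealOfVars_iff' m p

theorem mem_qIdeal_iff {p : MvPolynomial (Fin e) k} : p ∈ 𝔮 ↔ constantCoeff p = 0 := by
  rw [← pow_one 𝔮, mem_qIdeal_pow_iff, constantCoeff_eq]
  simp [Finsupp.degree_eq_zero_iff]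

theorem C_mem_qIdeal_iff {c : k} : (C c : MvPolynomial (Fin e) k) ∈ 𝔮 ↔ c = 0 := by
  simp [mem_qIdeal_iff]

theorem sub_C_constantCoeff_mem_qIdeal (p : MvPolynomial (Fin e) k) :
    p - C (constantCoeff p) ∈ 𝔮 := by
  simp [mem_qIdeal_iff]

theorem _root_.MvPolynomial.IsHomogeneous.mem_qIdeal_pow {p : MvPolynomial (Fin e) k} {n : ℕ}
    (hp : p.IsHomogeneous n) : p ∈ 𝔮 ^ n :=
  mem_qIdeal_pow_iff.2 fun _ hd => hp.coeff_eq_zero hd.ne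

theorem homogeneousComponent_eq_zero_of_mem_qIdeal_pow {p : MvPolynomial (Fin e) k} {m j : ℕ}
    (hp : p ∈ 𝔮 ^ m) (hj : j < m) : homogeneousComponent j p = 0 := by
  ext d
  rw [coeff_homogeneousComponent, coeff_zero]
  split_ifs with hd
  · exact mem_qIdeal_pow_iff.1 hp d (hd ▸ hj)
  · rfl

theorem sub_homogeneousComponent_mem_qIdeal_pow_succ {p : MvPolynomial (Fin e) k} {n : ℕ}
    (hp : p ∈ 𝔮 ^ n) : p - homogeneousComponent n p ∈ 𝔮 ^ (n + 1) := by
  rw [mem_qIdeal_pow_iff]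
  intro d hd
  rw [coeff_sub, coeff_homogeneousComponent]
  split_ifs with hdn
  · exact sub_self _
  · rw [sub_zero]; exact mem_qIdeal_pow_iff.1 hp d (by omega)

theorem mem_colon_qIdeal_iff {J : Ideal (MvPolynomial (Fin e) k)} {u : MvPolynomial (Fin e) k} :
    u ∈ J.colon 𝔮 ↔ ∀ i, X i * u ∈ J := by
  simp [qIdeal, Submodule.mem_colon, mul_comm]

theorem le_colon_qIdeal (J : Ideal (MvPolynomial (Fin e) k)) : J ≤ J.colon 𝔮 :=
  fun _ hu => mem_colon_qIdeal_iff.2 fun _ => J.mul_mem_left _ hu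

theorem mul_mem_of_mem_colon_qIdeal {J : Ideal (MvPolynomial (Fin e) k)}
    {u r : MvPolynomial (Fin e) k} (hu : u ∈ J.colon 𝔮) (hr : r ∈ 𝔮) : r * u ∈ J :=
  mul_comm u r ▸ Submodule.mem_colon.1 hu r hr

end QAdic

section Homogeneous

variable {J K : Ideal (MvPolynomial (Fin e) k)}

theorem _root_.IsHomogeneousIdeal.isHomogeneous_s12 (h : IsHomogeneousIdeal k e J) :
    J.IsHomogeneous 𝒜 := by
  obtain ⟨S, hS, rfl⟩ := h
  exact Ideal.homogeneous_span _ S hS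

theorem _root_.Ideal.IsHomogeneous.colon_qIdeal (hJ : J.IsHomogeneous 𝒜) :
    (J.colon 𝔮).IsHomogeneous 𝒜 := by
  refine isHomogeneous_iff_forall_homogeneousComponent_mem.2 fun u hu n => ?_
  refine mem_colon_qIdeal_iff.2 fun i => ?_
  rw [mul_comm, ← homogeneousComponent_mul_of_isHomogeneous (isHomogeneous_X k i), mul_comm]
  exact homogeneousComponent_mem_of_mem hJ (mem_colon_qIdeal_iff.1 hu i) _

theorem _root_.MvPolynomial.IsHomogeneous.mem_of_mem_qIdeal_pow_succ_sup (hJ : J.IsHomogeneous 𝒜)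
    {w : MvPolynomial (Fin e) k} {n : ℕ} (hw : w.IsHomogeneous n) (hmem : w ∈ 𝔮 ^ (n + 1) ⊔ J) :
    w ∈ J := by
  obtain ⟨u, hu, v, hv, rfl⟩ := Submodule.mem_sup.1 hmem
  have hcomp : homogeneousComponent n (u + v) = u + v := by
    rw [homogeneousComponent_of_mem hw, if_pos rfl]
  rw [← hcomp, map_add, homogeneousComponent_eq_zero_of_mem_qIdeal_pow hu n.lt_succ_self, zero_add]
  exact homogeneousComponent_mem_of_mem hJ hv n

theorem _root_.MvPolynomial.IsHomogeneous.mem_colon_qIdeal {w : MvPolynomial (Fin e) k} {n : ℕ}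
    (hw : w.IsHomogeneous n) (hJ : 𝔮 ^ (n + 1) ≤ J) : w ∈ J.colon 𝔮 :=
  mem_colon_qIdeal_iff.2 fun i => hJ <| by
    simpa [add_comm] using ((isHomogeneous_X k i).mul hw).mem_qIdeal_pow

end Homogeneous

section SocleDegree

variable {J I1 I2 : Ideal (MvPolynomial (Fin e) k)} {σ τ : ℕ}

theorem _root_.SocDeg.le_of_pow_succ_le (h : SocDeg k e J σ) (hτ : 𝔮 ^ (τ + 1) ≤ J) : σ ≤ τ := by
  by_contra! hlt
  exact h.1 ((Ideal.pow_le_pow_right hlt).trans hτ)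

theorem _root_.SocDeg.unique_s12 (h : SocDeg k e J σ) (h' : SocDeg k e J τ) : σ = τ :=
  le_antisymm (h.le_of_pow_succ_le h'.2) (h'.le_of_pow_succ_le h.2)

theorem _root_.SocDeg.inf_of_le {s1 s2 : ℕ} (h1 : SocDeg k e I1 s1) (h2 : SocDeg k e I2 s2)
    (hle : s1 ≤ s2) : SocDeg k e (I1 ⊓ I2) s2 :=
  ⟨fun h => h2.1 (h.trans inf_le_right),
    le_inf ((Ideal.pow_le_pow_right (by omega)).trans h1.2) h2.2⟩

theorem _root_.SocDeg.exists_isHomogeneous_notMem (hJ : J.IsHomogeneous 𝒜) (h : SocDeg k e J σ) :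
    ∃ w : MvPolynomial (Fin e) k, w.IsHomogeneous σ ∧ w ∉ J := by
  obtain ⟨v, hvq, hvJ⟩ := SetLike.not_le_iff_exists.1 h.1
  obtain ⟨n, hn⟩ : ∃ n, homogeneousComponent n v ∉ J :=
    not_forall.1 fun h => hvJ ((mem_iff_homogeneousComponent_mem hJ v).2 h)
  have hw := homogeneousComponent_isHomogeneous n v
  obtain rfl : n = σ := by
    refine le_antisymm ?_ ?_
    · by_contra! hlt
      exact hn (h.2 (Ideal.pow_le_pow_right hlt hw.mem_qIdeal_pow))
    · by_contra! hlt
      exact hn (homogeneousComponent_eq_zero_of_mem_qIdeal_pow hvq hlt ▸ J.zero_mem)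
  exact ⟨_, hw, hn⟩

theorem _root_.IniDeg.le_of_not_le {t s : ℕ} (ht : IniDeg k e I2 t) (hs : SocDeg k e I1 s)
    (h : ¬ I2 ≤ I1) : t ≤ s := by
  by_contra! hlt
  exact h (ht.1.trans ((Ideal.pow_le_pow_right hlt).trans hs.2))

theorem _root_.IniDeg.exists_isHomogeneous (hJ : J.IsHomogeneous 𝒜) {t : ℕ} (ht : IniDeg k e J t) :
    ∃ f ∈ J, f ≠ 0 ∧ f.IsHomogeneous t := by
  obtain ⟨v, hvJ, hvq⟩ := SetLike.not_le_iff_exists.1 ht.2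
  obtain ⟨d, hd, hdv⟩ : ∃ d : Fin e →₀ ℕ, d.degree < t + 1 ∧ coeff d v ≠ 0 := by
    simpa [mem_qIdeal_pow_iff] using hvq
  have hdt : d.degree = t := by
    by_contra hne
    exact hdv (mem_qIdeal_pow_iff.1 (ht.1 hvJ) d (by omega))
  refine ⟨homogeneousComponent t v, homogeneousComponent_mem_of_mem hJ hvJ t, ?_,
    homogeneousComponent_isHomogeneous t v⟩
  intro h0
  apply hdv
  simpa [coeff_homogeneousComponent, hdt] using congrArg (coeff d) h0

end SocleDegree

section ScalarIndependence

variable {J : Ideal (MvPolynomial (Fin e) k)} {x y x0 y0 : MvPolynomial (Fin e) k}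

def ScalarIndepMod (J : Ideal (MvPolynomial (Fin e) k)) (x y : MvPolynomial (Fin e) k) : Prop :=
  ∀ α β : k, C α * x + C β * y ∈ J → α = 0 ∧ β = 0

theorem C_mul_mem_iff {α : k} : C α * x ∈ J ↔ α = 0 ∨ x ∈ J := by
  rcases eq_or_ne α 0 with rfl | hα
  · simp
  · simp [hα, Ideal.unit_mul_mem_iff_mem J (hα.isUnit.map C)]

theorem ScalarIndepMod.notMem_left (h : ScalarIndepMod J x y) : x ∉ J := fun hx =>
  one_ne_zero (h 1 0 (by simpa using hx)).1

theorem ScalarIndepMod.notMem_right (h : ScalarIndepMod J x y) : y ∉ J := fun hy =>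
  one_ne_zero (h 0 1 (by simpa using hy)).2

theorem scalarIndepMod_of_forall_mem_qIdeal
    (h : ∀ c d : MvPolynomial (Fin e) k, c * x + d * y ∈ J → c ∈ 𝔮 ∧ d ∈ 𝔮) :
    ScalarIndepMod J x y :=
  fun α β hm => by simpa [C_mem_qIdeal_iff] using h _ _ hm

theorem ScalarIndepMod.forall_mem_qIdeal (h : ScalarIndepMod J x y) (hx : x ∈ J.colon 𝔮)
    (hy : y ∈ J.colon 𝔮) :
    ∀ c d : MvPolynomial (Fin e) k, c * x + d * y ∈ J → c ∈ 𝔮 ∧ d ∈ 𝔮 := by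
  intro c d hm
  have hc := mul_mem_of_mem_colon_qIdeal hx (sub_C_constantCoeff_mem_qIdeal c)
  have hd := mul_mem_of_mem_colon_qIdeal hy (sub_C_constantCoeff_mem_qIdeal d)
  have h0 := h (constantCoeff c) (constantCoeff d) <| by
    convert J.sub_mem hm (J.add_mem hc hd) using 1
    ring
  simpa [mem_qIdeal_iff] using h0

theorem exists_sub_mem_of_mem_sup_span_pair (hx0 : x0 ∈ J.colon 𝔮) (hy0 : y0 ∈ J.colon 𝔮)
    {u : MvPolynomial (Fin e) k} (hu : u ∈ J ⊔ Ideal.span {x0, y0}) :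
    ∃ α β : k, u - (C α * x0 + C β * y0) ∈ J := by
  obtain ⟨a, ha, v, hv, rfl⟩ := Submodule.mem_sup.1 hu
  obtain ⟨r, t, rfl⟩ := Ideal.mem_span_pair.1 hv
  refine ⟨constantCoeff r, constantCoeff t, ?_⟩
  have hr := mul_mem_of_mem_colon_qIdeal hx0 (sub_C_constantCoeff_mem_qIdeal r)
  have ht := mul_mem_of_mem_colon_qIdeal hy0 (sub_C_constantCoeff_mem_qIdeal t)
  convert J.add_mem ha (J.add_mem hr ht) using 1
  ring

theorem ScalarIndepMod.exchange (h0 : ScalarIndepMod J x0 y0) (hx0 : x0 ∈ J.colon 𝔮)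
    (hy0 : y0 ∈ J.colon 𝔮) (hx : x ∈ J ⊔ Ideal.span {x0, y0}) (hxJ : x ∉ J) :
    ScalarIndepMod J x x0 ∨ ScalarIndepMod J x y0 := by
  obtain ⟨a, b, hab⟩ := exists_sub_mem_of_mem_sup_span_pair hx0 hy0 hx
  rcases eq_or_ne b 0 with rfl | hb
  · have ha : a ≠ 0 := by
      rintro rfl
      exact hxJ (by simpa using hab)
    refine Or.inr fun α β hm => ?_
    have h := h0 (α * a) β <| by
      convert J.sub_mem hm (J.mul_mem_left (C α) hab) using 1
      simp only [map_mul, map_zero]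
      ring
    exact ⟨(mul_eq_zero.1 h.1).resolve_right ha, h.2⟩
  · refine Or.inl fun α β hm => ?_
    have h := h0 (α * a + β) (α * b) <| by
      convert J.sub_mem hm (J.mul_mem_left (C α) hab) using 1
      simp only [map_mul, map_add]
      ring
    have hα := (mul_eq_zero.1 h.2).resolve_right hb
    exact ⟨hα, by simpa [hα] using h.1⟩

theorem ScalarIndepMod.mem_sup_span_pair (hxy : ScalarIndepMod J x y) (hx0 : x0 ∈ J.colon 𝔮)
    (hy0 : y0 ∈ J.colon 𝔮) (hx : x ∈ J ⊔ Ideal.span {x0, y0})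
    (hy : y ∈ J ⊔ Ideal.span {x0, y0}) : x0 ∈ J ⊔ Ideal.span {x, y} := by
  obtain ⟨a1, b1, h1⟩ := exists_sub_mem_of_mem_sup_span_pair hx0 hy0 hx
  obtain ⟨a2, b2, h2⟩ := exists_sub_mem_of_mem_sup_span_pair hx0 hy0 hy
  -- Cramer's rule for the change of basis `(x0, y0) ↦ (x, y)` of the socle modulo `J`
  have hx0' : C b2 * x + C (-b1) * y - C (a1 * b2 - a2 * b1) * x0 ∈ J := by
    convert J.sub_mem (J.mul_mem_left (C b2) h1) (J.mul_mem_left (C b1) h2) using 1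
    simp only [map_mul, map_sub, map_neg]
    ring
  have hy0' : C (-a2) * x + C a1 * y - C (a1 * b2 - a2 * b1) * y0 ∈ J := by
    convert J.sub_mem (J.mul_mem_left (C a1) h2) (J.mul_mem_left (C a2) h1) using 1
    simp only [map_mul, map_sub, map_neg]
    ring
  have hdet : a1 * b2 - a2 * b1 ≠ 0 := by
    intro hdet
    have hb1 := (hxy b2 (-b1) (by simpa [hdet] using hx0')).2
    have ha1 := (hxy (-a2) a1 (by simpa [hdet] using hy0')).2
    exact hxy.notMem_left (by simpa [neg_eq_zero.1 hb1, ha1] using h1)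
  refine (Ideal.unit_mul_mem_iff_mem _ (hdet.isUnit.map C)).1 ?_
  have hcomb : C b2 * x + C (-b1) * y ∈ J ⊔ Ideal.span {x, y} :=
    Submodule.mem_sup_right (Ideal.mem_span_pair.2 ⟨_, _, rfl⟩)
  convert Submodule.sub_mem _ hcomb (Submodule.mem_sup_left hx0') using 1
  ring

theorem colon_eq_sup_span_pair (hcol : J.colon 𝔮 = J ⊔ Ideal.span {x0, y0})
    (hx : x ∈ J.colon 𝔮) (hy : y ∈ J.colon 𝔮) (hxy : ScalarIndepMod J x y) :
    J.colon 𝔮 = J ⊔ Ideal.span {x, y} := by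
  have hx0 : x0 ∈ J.colon 𝔮 := hcol ▸ Submodule.mem_sup_right (Ideal.subset_span (by simp))
  have hy0 : y0 ∈ J.colon 𝔮 := hcol ▸ Submodule.mem_sup_right (Ideal.subset_span (by simp))
  refine le_antisymm ?_ (sup_le (le_colon_qIdeal J) ?_)
  · rw [hcol] at hx hy ⊢
    refine sup_le le_sup_left (Ideal.span_le.2 (Set.pair_subset ?_ ?_))
    · exact hxy.mem_sup_span_pair hx0 hy0 hx hy
    · rw [Set.pair_comm] at hx hy
      exact hxy.mem_sup_span_pair hy0 hx0 hx hy
  · exact Ideal.span_le.2 (Set.pair_subset hx hy)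

theorem scalarIndepMod_of_isHomogeneous (hJ : J.IsHomogeneous 𝒜) {m n : ℕ}
    (hx : x.IsHomogeneous m) (hy : y.IsHomogeneous n) (hmn : m ≠ n) (hxJ : x ∉ J)
    (hyJ : y ∉ J) : ScalarIndepMod J x y := by
  intro α β hmem
  have hm := homogeneousComponent_mem_of_mem hJ hmem m
  have hn := homogeneousComponent_mem_of_mem hJ hmem n
  simp only [map_add, homogeneousComponent_C_mul, homogeneousComponent_of_mem hx,
    homogeneousComponent_of_mem hy, if_pos, hmn, hmn.symm, if_false, mul_zero, add_zero,
    zero_add] at hm hn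
  exact ⟨(C_mul_mem_iff.1 hm).resolve_right hxJ, (C_mul_mem_iff.1 hn).resolve_right hyJ⟩

end ScalarIndependence

section Gorenstein

variable {J K I1 I2 : Ideal (MvPolynomial (Fin e) k)} {x y : MvPolynomial (Fin e) k} {σ : ℕ}

theorem _root_.HasTypeOne.not_scalarIndepMod (h : HasTypeOne k e J) (hx : x ∈ J.colon 𝔮)
    (hy : y ∈ J.colon 𝔮) : ¬ ScalarIndepMod J x y := by
  obtain ⟨z, -, hcol⟩ := h
  rw [← Set.pair_eq_singleton] at hcol
  have hz : z ∈ J.colon 𝔮 := hcol ▸ Submodule.mem_sup_right (Ideal.subset_span (by simp))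
  obtain ⟨a1, b1, h1⟩ := exists_sub_mem_of_mem_sup_span_pair hz hz (hcol ▸ hx)
  obtain ⟨a2, b2, h2⟩ := exists_sub_mem_of_mem_sup_span_pair hz hz (hcol ▸ hy)
  intro hxy
  have h0 := (hxy (a2 + b2) (-(a1 + b1)) <| by
    convert J.sub_mem (J.mul_mem_left (C (a2 + b2)) h1) (J.mul_mem_left (C (a1 + b1)) h2)
      using 1
    simp only [map_add, map_neg]
    ring).2
  exact hxy.notMem_left (by simpa [← add_mul, ← map_add, neg_eq_zero.1 h0] using h1)

theorem _root_.HasTypeOne.not_hasTypeTwo (h : HasTypeOne k e J) : ¬ HasTypeTwo k e J := by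
  rintro ⟨x, y, hcol, hind⟩
  exact h.not_scalarIndepMod (hcol ▸ Submodule.mem_sup_right (Ideal.subset_span (by simp)))
    (hcol ▸ Submodule.mem_sup_right (Ideal.subset_span (by simp)))
    (scalarIndepMod_of_forall_mem_qIdeal hind)

theorem _root_.HasTypeOne.not_le_of_hasTypeTwo_inf (h2 : HasTypeOne k e I2)
    (h : HasTypeTwo k e (I1 ⊓ I2)) : ¬ I2 ≤ I1 := fun hle =>
  h2.not_hasTypeTwo (inf_eq_right.2 hle ▸ h)

theorem _root_.HasTypeOne.degree_eq_of_mem_colon (hJ : J.IsHomogeneous 𝒜) (h : HasTypeOne k e J)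
    (hσ : SocDeg k e J σ) {p : MvPolynomial (Fin e) k} {n : ℕ} (hp : p.IsHomogeneous n)
    (hpJ : p ∉ J) (hpc : p ∈ J.colon 𝔮) : n = σ := by
  obtain ⟨w, hw, hwJ⟩ := hσ.exists_isHomogeneous_notMem hJ
  by_contra hne
  exact h.not_scalarIndepMod hpc (hw.mem_colon_qIdeal hσ.2)
    (scalarIndepMod_of_isHomogeneous hJ hp hw hne hpJ hwJ)

theorem _root_.HasTypeOne.exists_mem_colon_of_not_le (hJ : J.IsHomogeneous 𝒜)
    (hK : K.IsHomogeneous 𝒜) (h : HasTypeOne k e J) (hσ : SocDeg k e J σ) (hKJ : ¬ K ≤ J) :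
    ∃ v ∈ K, v.IsHomogeneous σ ∧ v ∉ J ∧ v ∈ J.colon 𝔮 := by
  set S := {n : ℕ | ∃ v ∈ K, v.IsHomogeneous n ∧ v ∉ J}
  have hS : BddAbove S := ⟨σ, fun n ⟨v, _, hv, hvJ⟩ => by
    by_contra! hlt
    exact hvJ (hσ.2 (Ideal.pow_le_pow_right hlt hv.mem_qIdeal_pow))⟩
  have hSne : S.Nonempty := by
    obtain ⟨u, huK, huJ⟩ := SetLike.not_le_iff_exists.1 hKJ
    obtain ⟨n, hn⟩ := not_forall.1 fun h => huJ ((mem_iff_homogeneousComponent_mem hJ u).2 h)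
    exact ⟨n, _, homogeneousComponent_mem_of_mem hK huK n,
      homogeneousComponent_isHomogeneous n u, hn⟩
  -- a homogeneous element of `K \ J` of maximal degree lies in the socle of `Q/J`
  obtain ⟨v, hvK, hv, hvJ⟩ := Nat.sSup_mem hSne hS
  have hvc : v ∈ J.colon 𝔮 := mem_colon_qIdeal_iff.2 fun i => by
    by_contra hXv
    have hmem : sSup S + 1 ∈ S := ⟨X i * v, K.mul_mem_left _ hvK,
      by simpa [add_comm] using (isHomogeneous_X k i).mul hv, hXv⟩
    exact (le_csSup hS hmem).not_gt (Nat.lt_succ_self _)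
  exact ⟨v, hvK, h.degree_eq_of_mem_colon hJ hσ hv hvJ hvc ▸ hv, hvJ, hvc⟩

theorem _root_.HasTypeOne.mem_of_qIdeal_pow_mul_le (hJ : J.IsHomogeneous 𝒜)
    (h : HasTypeOne k e J) (hσ : SocDeg k e J σ) {t : ℕ} (hKJ : 𝔮 ^ (σ - t) * K ≤ J)
    {f : MvPolynomial (Fin e) k} (hfK : f ∈ K) (hf : f.IsHomogeneous t) (ht : t ≤ σ) :
    f ∈ J := by
  by_contra hfJ
  obtain ⟨v, hvf, hv, hvJ, -⟩ := h.exists_mem_colon_of_not_le hJ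
    (Ideal.homogeneous_span _ {f} (by simpa using ⟨t, hf⟩)) hσ
    (by simpa [Ideal.span_le] using hfJ)
  obtain ⟨g, rfl⟩ := Ideal.mem_span_singleton'.1 hvf
  have hcomp := homogeneousComponent_mul_of_isHomogeneous hf g (σ - t)
  rw [Nat.sub_add_cancel ht, homogeneousComponent_of_mem hv, if_pos rfl] at hcomp
  exact hvJ (hcomp ▸ hKJ (Ideal.mul_mem_mul
    (homogeneousComponent_isHomogeneous _ g).mem_qIdeal_pow hfK))

theorem colon_inf_le_qIdeal_pow_sup (hI1 : I1.IsHomogeneous 𝒜) (hI2 : I2.IsHomogeneous 𝒜)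
    (h1 : HasTypeOne k e I1) (h2 : HasTypeOne k e I2) {s1 s2 : ℕ} (hs1 : SocDeg k e I1 s1)
    (hs2 : SocDeg k e I2 s2) : (I1 ⊓ I2).colon 𝔮 ≤ 𝔮 ^ min s1 s2 ⊔ I1 ⊓ I2 := by
  intro u hu
  rw [← sum_homogeneousComponent u]
  refine Ideal.sum_mem _ fun n _ => ?_
  have hc := homogeneousComponent_mem_of_mem (hI1.inf hI2).colon_qIdeal hu n
  have hn := homogeneousComponent_isHomogeneous n u
  by_cases hcJ : homogeneousComponent n u ∈ I1 ⊓ I2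
  · exact Submodule.mem_sup_right hcJ
  rw [Submodule.inf_colon] at hc
  refine Submodule.mem_sup_left (Ideal.pow_le_pow_right ?_ hn.mem_qIdeal_pow)
  rcases not_and_or.1 hcJ with hc1 | hc2
  · exact h1.degree_eq_of_mem_colon hI1 hs1 hn hc1 hc.1 ▸ min_le_left _ _
  · exact h2.degree_eq_of_mem_colon hI2 hs2 hn hc2 hc.2 ▸ min_le_right _ _

end Gorenstein

section HilbertFunction

variable {J K : Ideal (MvPolynomial (Fin e) k)}

noncomputable def homogeneousBasis (n : ℕ) :
    Module.Basis {d : Fin e →₀ ℕ // d.degree = n} k (𝒜 n) := by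
  rw [homogeneousSubmodule_eq_finsupp_supported]
  exact basisRestrictSupport k _

noncomputable def degreeEqEquivSym (n : ℕ) : {d : Fin e →₀ ℕ // d.degree = n} ≃ Sym (Fin e) n :=
  ((Sym.equivNatSum (Fin e) n).trans (Equiv.subtypeEquivRight fun _ => Iff.rfl)).symm

instance (n : ℕ) : Finite {d : Fin e →₀ ℕ // d.degree = n} :=
  Finite.of_equiv _ (degreeEqEquivSym n).symm

instance (n : ℕ) : FiniteDimensional k (𝒜 n) := Module.Finite.of_basis (homogeneousBasis n)

theorem finrank_homogeneousSubmodule (he : 1 ≤ e) (n : ℕ) :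
    Module.finrank k (𝒜 n) = hQ e n := by
  rw [Module.finrank_eq_nat_card_basis (homogeneousBasis n), Nat.card_congr (degreeEqEquivSym n),
    Nat.card_eq_fintype_card, Sym.card_sym_eq_choose, Fintype.card_fin, hQ, Nat.sub_add_comm he,
    Nat.choose_symm_add]

noncomputable def homogeneousPart (J : Ideal (MvPolynomial (Fin e) k)) (n : ℕ) :
    Submodule k (MvPolynomial (Fin e) k) :=
  𝒜 n ⊓ J.restrictScalars k

instance (J : Ideal (MvPolynomial (Fin e) k)) (n : ℕ) :
    FiniteDimensional k (homogeneousPart J n) :=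
  Submodule.finiteDimensional_of_le inf_le_left

noncomputable def formsModulo (J : Ideal (MvPolynomial (Fin e) k)) (n : ℕ) :
    𝒜 n →ₗ[k] MvPolynomial (Fin e) k ⧸ (𝔮 ^ (n + 1) ⊔ J) :=
  (Ideal.Quotient.mkₐ k _).toLinearMap ∘ₗ (𝒜 n).subtype

theorem range_formsModulo (J : Ideal (MvPolynomial (Fin e) k)) (n : ℕ) :
    LinearMap.range (formsModulo J n) =
      ((𝔮 ^ n ⊔ J).map (Ideal.Quotient.mk (𝔮 ^ (n + 1) ⊔ J))).restrictScalars k := by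
  apply le_antisymm
  · rintro _ ⟨⟨w, hw⟩, rfl⟩
    exact Ideal.mem_map_of_mem _ (Submodule.mem_sup_left (IsHomogeneous.mem_qIdeal_pow hw))
  · intro z hz
    obtain ⟨u, hu, rfl⟩ := (Ideal.mem_map_iff_of_surjective _ Ideal.Quotient.mk_surjective).1 hz
    obtain ⟨a, ha, b, hb, rfl⟩ := Submodule.mem_sup.1 hu
    refine ⟨⟨homogeneousComponent n a, homogeneousComponent_mem n a⟩, ?_⟩
    change Ideal.Quotient.mk _ (homogeneousComponent n a) = Ideal.Quotient.mk _ (a + b)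
    refine (Ideal.Quotient.mk_eq_mk_iff_sub_mem _ _).2 ?_
    convert neg_mem (Submodule.add_mem_sup (sub_homogeneousComponent_mem_qIdeal_pow_succ ha) hb)
      using 1
    ring

theorem ker_formsModulo (hJ : J.IsHomogeneous 𝒜) (n : ℕ) :
    LinearMap.ker (formsModulo J n) = (homogeneousPart J n).comap (𝒜 n).subtype := by
  ext ⟨w, hw⟩
  change Ideal.Quotient.mk _ w = 0 ↔ w ∈ 𝒜 n ∧ w ∈ J
  rw [Ideal.Quotient.eq_zero_iff_mem]
  exact ⟨fun h => ⟨hw, IsHomogeneous.mem_of_mem_qIdeal_pow_succ_sup hJ hw h⟩,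
    fun h => Submodule.mem_sup_right h.2⟩

theorem hilb_add_finrank_homogeneousPart (he : 1 ≤ e) (hJ : J.IsHomogeneous 𝒜) (n : ℕ) :
    hilb k e J n + Module.finrank k (homogeneousPart J n) = hQ e n := by
  rw [← finrank_homogeneousSubmodule (k := k) he n,
    ← (formsModulo J n).finrank_range_add_finrank_ker,
    range_formsModulo, ker_formsModulo hJ,
    (Submodule.comapSubtypeEquivOfLe (p := homogeneousPart J n) inf_le_left).finrank_eq]
  rfl

theorem homogeneousPart_eq_of_hilb_eq (he : 1 ≤ e) (hJ : J.IsHomogeneous 𝒜)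
    (hK : K.IsHomogeneous 𝒜) (hJK : J ≤ K) {n : ℕ} (h : hilb k e J n = hilb k e K n) :
    homogeneousPart J n = homogeneousPart K n := by
  have hJn := hilb_add_finrank_homogeneousPart he hJ n
  have hKn := hilb_add_finrank_homogeneousPart he hK n
  exact Submodule.eq_of_le_of_finrank_eq (inf_le_inf_left _ hJK) (by omega)

theorem le_of_hilb_eq (he : 1 ≤ e) (hJ : J.IsHomogeneous 𝒜) (hK : K.IsHomogeneous 𝒜)
    (hJK : J ≤ K) {m : ℕ} (hKm : K ≤ 𝔮 ^ m) (h : ∀ n, m ≤ n → hilb k e J n = hilb k e K n) :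
    K ≤ J := by
  intro f hf
  refine (mem_iff_homogeneousComponent_mem hJ f).2 fun n => ?_
  rcases lt_or_ge n m with hn | hn
  · rw [homogeneousComponent_eq_zero_of_mem_qIdeal_pow (hKm hf) hn]
    exact J.zero_mem
  · have hmem : homogeneousComponent n f ∈ homogeneousPart K n :=
      ⟨homogeneousComponent_mem n f, homogeneousComponent_mem_of_mem hK hf n⟩
    exact (homogeneousPart_eq_of_hilb_eq he hJ hK hJK (h n hn) ▸ hmem).2

theorem hilb_lt_hQ (he : 1 ≤ e) (hJ : J.IsHomogeneous 𝒜) {f : MvPolynomial (Fin e) k} {n : ℕ}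
    (hfJ : f ∈ J) (hf0 : f ≠ 0) (hf : f.IsHomogeneous n) : hilb k e J n < hQ e n := by
  have hpos : Module.finrank k (homogeneousPart J n) ≠ 0 := by
    intro h0
    have hmem : f ∈ homogeneousPart J n := ⟨hf, hfJ⟩
    rw [Submodule.finrank_eq_zero.1 h0] at hmem
    exact hf0 ((Submodule.mem_bot k).1 hmem)
  have := hilb_add_finrank_homogeneousPart he hJ n
  omega

end HilbertFunction

section Intersection

variable {I1 I2 : Ideal (MvPolynomial (Fin e) k)} {s1 s2 t2 : ℕ}

theorem sSup_setOf_mem_pow_sup_eq {R : Type*} [CommSemiring R] {q J : Ideal R} {v : R} {n : ℕ}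
    (hn : v ∈ q ^ n ⊔ J) (hn1 : v ∉ q ^ (n + 1) ⊔ J) : sSup {i | v ∈ q ^ i ⊔ J} = n := by
  have hbdd : ∀ i ∈ {i | v ∈ q ^ i ⊔ J}, i ≤ n := fun i hi => by
    by_contra! hlt
    exact hn1 (sup_le_sup_right (Ideal.pow_le_pow_right hlt) J hi)
  exact le_antisymm (csSup_le ⟨n, hn⟩ hbdd) (le_csSup ⟨n, hbdd⟩ hn)

theorem exists_socle_basis (hI1 : I1.IsHomogeneous 𝒜) (hI2 : I2.IsHomogeneous 𝒜)
    (h1 : HasTypeOne k e I1) (h2 : HasTypeOne k e I2) (hs1 : SocDeg k e I1 s1)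
    (hs2 : SocDeg k e I2 s2) (hle : s1 ≤ s2) (htype2 : HasTypeTwo k e (I1 ⊓ I2)) :
    ∃ x y : MvPolynomial (Fin e) k,
      (I1 ⊓ I2).colon 𝔮 = (I1 ⊓ I2) ⊔ Ideal.span {x, y} ∧
      (∀ c d : MvPolynomial (Fin e) k, c * x + d * y ∈ I1 ⊓ I2 → c ∈ 𝔮 ∧ d ∈ 𝔮) ∧
      sSup {i : ℕ | x ∈ 𝔮 ^ i ⊔ (I1 ⊓ I2)} = s1 ∧
      sSup {i : ℕ | y ∈ 𝔮 ^ i ⊔ (I1 ⊓ I2)} = s2 := by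
  have hJ := hI1.inf hI2
  have hsJ : SocDeg k e (I1 ⊓ I2) s2 := hs1.inf_of_le hs2 hle
  obtain ⟨x0, y0, hcol, hind⟩ := id htype2
  have hx0 : x0 ∈ (I1 ⊓ I2).colon 𝔮 :=
    hcol ▸ Submodule.mem_sup_right (Ideal.subset_span (by simp))
  have hy0 : y0 ∈ (I1 ⊓ I2).colon 𝔮 :=
    hcol ▸ Submodule.mem_sup_right (Ideal.subset_span (by simp))
  obtain ⟨x, hxI2, hx, hxI1, hxc1⟩ :=
    h1.exists_mem_colon_of_not_le hI1 hI2 hs1 (h2.not_le_of_hasTypeTwo_inf htype2)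
  have hxc : x ∈ (I1 ⊓ I2).colon 𝔮 := by
    rw [Submodule.inf_colon]
    exact ⟨hxc1, le_colon_qIdeal I2 hxI2⟩
  have hxJ : x ∉ I1 ⊓ I2 := fun h => hxI1 h.1
  obtain ⟨y, hyc, hxy, hyq⟩ : ∃ y ∈ (I1 ⊓ I2).colon 𝔮,
      ScalarIndepMod (I1 ⊓ I2) x y ∧ y ∈ 𝔮 ^ s2 ⊔ I1 ⊓ I2 := by
    rcases hle.lt_or_eq with hlt | rfl
    · obtain ⟨z, hz, hzJ⟩ := hsJ.exists_isHomogeneous_notMem hJ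
      exact ⟨z, hz.mem_colon_qIdeal hsJ.2,
        scalarIndepMod_of_isHomogeneous hJ hx hz hlt.ne hxJ hzJ,
        Submodule.mem_sup_left hz.mem_qIdeal_pow⟩
    · have hsoc := colon_inf_le_qIdeal_pow_sup hI1 hI2 h1 h2 hs1 hs2
      rw [min_self] at hsoc
      rcases (scalarIndepMod_of_forall_mem_qIdeal hind).exchange hx0 hy0
        (hcol ▸ hxc) hxJ with h | h
      · exact ⟨x0, hx0, h, hsoc hx0⟩
      · exact ⟨y0, hy0, h, hsoc hy0⟩
  refine ⟨x, y, colon_eq_sup_span_pair hcol hxc hyc hxy, hxy.forall_mem_qIdeal hxc hyc,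
    sSup_setOf_mem_pow_sup_eq (Submodule.mem_sup_left hx.mem_qIdeal_pow)
      (fun h => hxJ (hx.mem_of_mem_qIdeal_pow_succ_sup hJ h)),
    sSup_setOf_mem_pow_sup_eq hyq ?_⟩
  rw [sup_eq_right.2 hsJ.2]
  exact hxy.notMem_right

theorem _root_.IniDeg.qIdeal_pow_mul_le (ht2 : IniDeg k e I2 t2) (hs1 : SocDeg k e I1 s1) :
    𝔮 ^ (s1 - t2 + 1) * I2 ≤ I1 :=
  calc 𝔮 ^ (s1 - t2 + 1) * I2 ≤ 𝔮 ^ (s1 - t2 + 1) * 𝔮 ^ t2 := Ideal.mul_mono_right ht2.1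
    _ = 𝔮 ^ (s1 - t2 + 1 + t2) := (pow_add _ _ _).symm
    _ ≤ 𝔮 ^ (s1 + 1) := Ideal.pow_le_pow_right (by omega)
    _ ≤ I1 := hs1.2

theorem not_qIdeal_pow_mul_le (he : 1 ≤ e) (hI1 : I1.IsHomogeneous 𝒜) (hI2 : I2.IsHomogeneous 𝒜)
    (h1 : HasTypeOne k e I1) (hs1 : SocDeg k e I1 s1) (hle : s1 ≤ s2)
    (ht2 : IniDeg k e I2 t2) (h2c : CompressedGor k e I2 s2) (hI2I1 : ¬ I2 ≤ I1) {b : ℕ}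
    (hR : ∀ i, hilb k e (I1 ⊓ I2) i = min (hQ e i) (hQat e b i + hQat e s2 i)) :
    ¬ 𝔮 ^ (s1 - t2) * I2 ≤ I1 := by
  have hJ := hI1.inf hI2
  have ht2s1 : t2 ≤ s1 := ht2.le_of_not_le hs1 hI2I1
  -- above degree `b` the Hilbert functions of `Q/(I1 ∩ I2)` and `Q/I2` agree
  have hbt2 : t2 ≤ b := by
    by_contra! hlt
    refine hI2I1 ((le_of_hilb_eq he hJ hI2 inf_le_right
      (ht2.1.trans (Ideal.pow_le_pow_right hlt)) fun n hn => ?_).trans inf_le_left)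
    rw [hR n, h2c n, hQat, if_neg (by omega), zero_add]
  intro h
  have hpart : homogeneousPart (I1 ⊓ I2) t2 = homogeneousPart I2 t2 :=
    le_antisymm (inf_le_inf_left _ fun _ hf => hf.2) fun f ⟨hf, hf2⟩ =>
      ⟨hf, h1.mem_of_qIdeal_pow_mul_le hI1 hs1 h hf2 hf ht2s1, hf2⟩
  obtain ⟨f, hf2, hf0, hf⟩ := ht2.exists_isHomogeneous hI2
  have hlt := hilb_lt_hQ he hI2 hf2 hf0 hf
  have hJt := hilb_add_finrank_homogeneousPart he hJ t2
  have h2t := hilb_add_finrank_homogeneousPart he hI2 t2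
  have hRt := hR t2
  have h2ct := h2c t2
  simp only [hQat, if_pos hbt2, if_pos (ht2s1.trans hle)] at hRt h2ct
  have : 0 < hQ e (b - t2) := Nat.choose_pos (by omega)
  rw [hpart] at hJt
  omega

end Intersection

end CompressedGorenstein

theorem stmt12_general (k : Type*) [Field k] (e : ℕ) (he : 3 ≤ e)
    (I1 I2 : Ideal (MvPolynomial (Fin e) k))
    (h1hom : IsHomogeneousIdeal k e I1) (h2hom : IsHomogeneousIdeal k e I2)
    (h1gor : HasTypeOne k e I1) (h2gor : HasTypeOne k e I2)
    (s1 s2 s t2 a : ℕ)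
    (hs1 : SocDeg k e I1 s1) (hs2 : SocDeg k e I2 s2) (hle : s1 ≤ s2)
    (ht2 : IniDeg k e I2 t2)
    (h2c : CompressedGor k e I2 s2)
    (htype2 : HasTypeTwo k e (I1 ⊓ I2))
    (hs : SocDeg k e (I1 ⊓ I2) s)
    -- `R` is compressed
    (hcomp : ∃ b ≤ s, ∀ i,
      hilb k e (I1 ⊓ I2) i = min (hQ e i) (hQat e b i + hQat e s i))
    (ha : a = sInf {i : ℕ | qIdeal k e ^ i * I2 ≤ I1}) :
    (∃ x y : MvPolynomial (Fin e) k,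
      (I1 ⊓ I2).colon (qIdeal k e) = (I1 ⊓ I2) ⊔ Ideal.span {x, y} ∧
      (∀ c d : MvPolynomial (Fin e) k, c * x + d * y ∈ I1 ⊓ I2 →
        c ∈ qIdeal k e ∧ d ∈ qIdeal k e) ∧
      sSup {i : ℕ | x ∈ qIdeal k e ^ i ⊔ (I1 ⊓ I2)} = s1 ∧
      sSup {i : ℕ | y ∈ qIdeal k e ^ i ⊔ (I1 ⊓ I2)} = s) ∧
    a = s1 - t2 + 1 := by
  have hI1 := h1hom.isHomogeneous_s12
  have hI2 := h2hom.isHomogeneous_s12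
  obtain rfl : s = s2 := hs.unique_s12 (hs1.inf_of_le hs2 hle)
  obtain ⟨b, -, hR⟩ := hcomp
  refine ⟨CompressedGorenstein.exists_socle_basis hI1 hI2 h1gor h2gor hs1 hs2 hle htype2, ?_⟩
  have hupward : ∀ i j, i ≤ j → i ∈ {i : ℕ | qIdeal k e ^ i * I2 ≤ I1} →
      j ∈ {i : ℕ | qIdeal k e ^ i * I2 ≤ I1} := fun i j hij hi =>
    (Ideal.mul_mono_left (Ideal.pow_le_pow_right hij)).trans hi
  rw [ha, Nat.sInf_upward_closed_eq_succ_iff hupward]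
  exact ⟨ht2.qIdeal_pow_mul_le hs1, CompressedGorenstein.not_qIdeal_pow_mul_le (by omega) hI1 hI2
    h1gor hs1 hle ht2 h2c (h2gor.not_le_of_hasTypeTwo_inf htype2) hR⟩

/-- In the setup of two homogeneous compressed Gorenstein
ideals `I1, I2` in `e ≥ 3` variables with `R = Q/(I1 ∩ I2)` compressed of type
2, the socle polynomial of `R` is `χ^{s1} + χ^{s}` (i.e. the socle of `R` has a
basis consisting of one element of valuation `s1` and one of valuation `s`),
and `a = min{ i ≥ 0 : q^i I2 ⊆ I1 }` equals `s1 − t2 + 1`. -/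
theorem stmt12 (k : Type*) [Field k] (e : ℕ) (he : 3 ≤ e)
    (I1 I2 : Ideal (MvPolynomial (Fin e) k))
    (h1hom : IsHomogeneousIdeal k e I1) (h2hom : IsHomogeneousIdeal k e I2)
    (h1p : I1.IsPrimary) (h1r : I1.radical = qIdeal k e)
    (h2p : I2.IsPrimary) (h2r : I2.radical = qIdeal k e)
    (h1q2 : I1 ≤ qIdeal k e ^ 2) (h2q2 : I2 ≤ qIdeal k e ^ 2)
    (h1gor : HasTypeOne k e I1) (h2gor : HasTypeOne k e I2)
    (s1 s2 s t2 a : ℕ)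
    (hs1 : SocDeg k e I1 s1) (hs2 : SocDeg k e I2 s2) (hle : s1 ≤ s2)
    (ht2 : IniDeg k e I2 t2)
    (h1c : CompressedGor k e I1 s1) (h2c : CompressedGor k e I2 s2)
    (htype2 : HasTypeTwo k e (I1 ⊓ I2))
    (hs : SocDeg k e (I1 ⊓ I2) s)
    -- `R` is compressed
    (hcomp : ∃ b ≤ s, ∀ i,
      hilb k e (I1 ⊓ I2) i = min (hQ e i) (hQat e b i + hQat e s i))
    (ha : a = sInf {i : ℕ | qIdeal k e ^ i * I2 ≤ I1}) :
    (∃ x y : MvPolynomial (Fin e) k,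
      (I1 ⊓ I2).colon (qIdeal k e) = (I1 ⊓ I2) ⊔ Ideal.span {x, y} ∧
      (∀ c d : MvPolynomial (Fin e) k, c * x + d * y ∈ I1 ⊓ I2 →
        c ∈ qIdeal k e ∧ d ∈ qIdeal k e) ∧
      sSup {i : ℕ | x ∈ qIdeal k e ^ i ⊔ (I1 ⊓ I2)} = s1 ∧
      sSup {i : ℕ | y ∈ qIdeal k e ^ i ⊔ (I1 ⊓ I2)} = s) ∧
    a = s1 - t2 + 1 :=
  stmt12_general k e he I1 I2 h1hom h2hom h1gor h2gor s1 s2 s t2 a hs1 hs2 hle ht2 h2c htype2 hs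
    hcomp ha
end
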